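/- Let n be a natural number and let σ and τ be finitely generated convex cones in ℝⁿ (each the set of all nonnegative real linear combinations of a finite family of vectors) whose linear spans equal all of ℝⁿ. For a cone C, call a subset F a face of C if there is a linear functional ℓ on ℝⁿ which is nonnegative on C such that F = {x ∈ C : ℓ(x) = 0}; say that τ crosses σ if σ ∩ τ is not a face of σ. If τ crosses σ, then there exists a face F of τ whose linear span has dimension n − 1 such that F crosses σ, i.e., σ ∩ F is not a face of σ. -/

import Mathlib

/-- A finitely generated convex cone in `ℝⁿ`: the set of all nonnegative real linear
combinations of a finite family of vectors. -/
def IsFGConvexCone {n : ℕ} (C : Set (Fin n → ℝ)) : Prop :=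
  ∃ (m : ℕ) (v : Fin m → (Fin n → ℝ)),
    C = {x | ∃ c : Fin m → ℝ, (∀ i, 0 ≤ c i) ∧ x = ∑ i, c i • v i}

/-- `F` is a face of `C`: there is a linear functional `ℓ`, nonnegative on `C`, with
`F = {x ∈ C | ℓ x = 0}`. -/
def IsFaceOf {n : ℕ} (F C : Set (Fin n → ℝ)) : Prop :=
  ∃ ℓ : (Fin n → ℝ) →ₗ[ℝ] ℝ, (∀ x ∈ C, 0 ≤ ℓ x) ∧ F = {x ∈ C | ℓ x = 0}

/-!
By Weyl's theorem, proved by Fourier–Motzkin elimination, `τ = {x | ∀ ℓ ∈ D, 0 ≤ ℓ x}` for a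
finite set `D` of functionals, which we take minimal. Minimality and `span τ = ⊤` make each
`τ ∩ {ℓ = 0}`, `ℓ ∈ D`, a facet spanning `ker ℓ`. If some `ℓ ∈ D` vanishes on `σ ∩ τ`, its facet
meets `σ` in `σ ∩ τ`. Otherwise `σ ∩ τ` contains a point `x` with `0 < ℓ x` for all `ℓ ∈ D`, and
`σ ⊄ τ` because `σ` is a face of itself. Moving from `x` towards some `y ∈ σ \ τ`, one leaves `τ`
through a facet `F` at a point strictly between `x` and `y`. A functional exhibiting `σ ∩ F` as a
face of `σ` vanishes at that point, hence at `x`, so `x ∈ F`, which is absurd.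
-/

open Module
open PointedCone (dual hull DualFG)

theorem Finset.exists_between_of_forall_le {ι κ α : Type*} [LinearOrder α]
    (s : Finset ι) (t : Finset κ) (f : ι → α) (g : κ → α) (a : α)
    (hfg : ∀ i ∈ s, ∀ j ∈ t, f i ≤ g j) (hg : ∀ j ∈ t, a ≤ g j) :
    ∃ c, a ≤ c ∧ (∀ i ∈ s, f i ≤ c) ∧ ∀ j ∈ t, c ≤ g j := by
  classical
  refine ⟨(insert a (s.image f)).max' (Finset.insert_nonempty _ _),
    Finset.le_max' _ _ (Finset.mem_insert_self _ _),
    fun i hi => Finset.le_max' _ _ (Finset.mem_insert_of_mem (Finset.mem_image_of_mem f hi)),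
    fun j hj => Finset.max'_le _ _ _ ?_⟩
  simp only [Finset.mem_insert, Finset.mem_image, forall_eq_or_imp, forall_exists_index,
    and_imp, forall_apply_eq_imp_iff₂]
  exact ⟨hg j hj, fun i hi => hfg i hi j hj⟩

variable {E : Type*} [AddCommGroup E] [Module ℝ E]

theorem PointedCone.mem_dual_id {D : Set (Dual ℝ E)} {x : E} :
    x ∈ dual .id D ↔ ∀ ℓ ∈ D, 0 ≤ ℓ x := Iff.rfl

-- Eliminating `t` from `∀ ℓ ∈ D, 0 ≤ ℓ (y - t • v)`; cuts out `dual D ⊔ hull {v}`.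
open scoped Classical in
noncomputable def fourierMotzkin (D : Finset (Dual ℝ E)) (v : E) : Finset (Dual ℝ E) :=
  D.filter (0 ≤ · v) ∪
    (D.filter (0 < · v) ×ˢ D.filter (· v < 0)).image fun pq => pq.1 v • pq.2 - pq.2 v • pq.1

variable {D : Finset (Dual ℝ E)} {v : E}

theorem mem_fourierMotzkin {ℓ : Dual ℝ E} : ℓ ∈ fourierMotzkin D v ↔
    ℓ ∈ D ∧ 0 ≤ ℓ v ∨ ∃ p ∈ D, ∃ q ∈ D, 0 < p v ∧ q v < 0 ∧ p v • q - q v • p = ℓ := by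
  simp only [fourierMotzkin, Finset.mem_union, Finset.mem_filter, Finset.mem_image,
    Finset.mem_product, Prod.exists]
  aesop

theorem add_smul_mem_dual_fourierMotzkin {x : E} (hx : x ∈ dual .id (D : Set (Dual ℝ E)))
    {t : ℝ} (ht : 0 ≤ t) : x + t • v ∈ dual .id (fourierMotzkin D v : Set (Dual ℝ E)) := by
  intro ℓ hℓ
  rcases mem_fourierMotzkin.1 hℓ with ⟨hℓ, hv⟩ | ⟨p, hp, q, hq, hpv, hqv, rfl⟩
  · simpa using add_nonneg (hx hℓ) (mul_nonneg ht hv)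
  · have hqx : 0 ≤ q x := hx hq
    have hpx : 0 ≤ p x := hx hp
    simp only [LinearMap.id_coe, id_eq, LinearMap.sub_apply, LinearMap.smul_apply, map_add,
      map_smul, smul_eq_mul]
    nlinarith [mul_nonneg hpv.le hqx, mul_nonneg (neg_nonneg.2 hqv.le) hpx]

theorem exists_eq_add_smul_of_mem_dual_fourierMotzkin {y : E}
    (hy : y ∈ dual .id (fourierMotzkin D v : Set (Dual ℝ E))) :
    ∃ x ∈ dual .id (D : Set (Dual ℝ E)), ∃ t : ℝ, 0 ≤ t ∧ y = x + t • v := by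
  have hy' : ∀ ℓ ∈ fourierMotzkin D v, 0 ≤ ℓ y := fun ℓ hℓ => hy hℓ
  obtain ⟨t, ht, hlow, hup⟩ := Finset.exists_between_of_forall_le (D.filter (· v < 0))
    (D.filter (0 < · v)) (fun ℓ => ℓ y / ℓ v) (fun ℓ => ℓ y / ℓ v) 0
    (fun q hq p hp => by
      rw [Finset.mem_filter] at hp hq
      have := hy' _ (mem_fourierMotzkin.2 (.inr ⟨p, hp.1, q, hq.1, hp.2, hq.2, rfl⟩))
      simp only [LinearMap.sub_apply, LinearMap.smul_apply, smul_eq_mul] at this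
      rw [← neg_div_neg_eq, div_le_div_iff₀ (neg_pos.2 hq.2) hp.2]
      linarith)
    (fun p hp => by
      rw [Finset.mem_filter] at hp
      exact div_nonneg (hy' p (mem_fourierMotzkin.2 (.inl ⟨hp.1, hp.2.le⟩))) hp.2.le)
  refine ⟨y - t • v, fun ℓ hℓ => ?_, t, ht, (sub_add_cancel y _).symm⟩
  simp only [LinearMap.id_coe, id_eq, map_sub, map_smul, smul_eq_mul, sub_nonneg]
  rcases lt_trichotomy (ℓ v) 0 with h | h | h
  · exact (div_le_iff_of_neg h).1 (hlow ℓ (Finset.mem_filter.2 ⟨hℓ, h⟩))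
  · simpa [h] using hy' ℓ (mem_fourierMotzkin.2 (.inl ⟨hℓ, h.ge⟩))
  · exact (le_div_iff₀ h).1 (hup ℓ (Finset.mem_filter.2 ⟨hℓ, h⟩))

theorem PointedCone.DualFG.sup_hull_singleton {C : PointedCone ℝ E} (hC : C.DualFG .id)
    (v : E) : (C ⊔ hull ℝ {v}).DualFG .id := by
  obtain ⟨D, rfl⟩ := hC
  refine ⟨fourierMotzkin D v, SetLike.ext fun y => ⟨fun hy => ?_, fun hy => ?_⟩⟩
  · obtain ⟨x, hx, t, ht, rfl⟩ := exists_eq_add_smul_of_mem_dual_fourierMotzkin hy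
    exact Submodule.add_mem_sup hx ((hull ℝ {v}).smul_mem ht (subset_hull rfl))
  · obtain ⟨x, hx, z, hz, rfl⟩ := Submodule.mem_sup.1 hy
    obtain ⟨t, rfl⟩ := Submodule.mem_span_singleton.1 hz
    rw [← Nonneg.coe_smul]
    exact add_smul_mem_dual_fourierMotzkin hx t.2

theorem PointedCone.dualFG_bot [FiniteDimensional ℝ E] : (⊥ : PointedCone ℝ E).DualFG .id := by
  classical
  let b := finBasis ℝ E
  refine ⟨Finset.univ.image b.coord ∪ Finset.univ.image (-b.coord ·), SetLike.ext fun x => ?_⟩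
  simp only [mem_dual_id, Finset.coe_union, Finset.coe_image, Finset.coe_univ, Set.image_univ,
    Set.mem_union, Set.mem_range]
  rw [Submodule.mem_bot, ← b.forall_coord_eq_zero_iff]
  constructor
  · intro h i
    have h1 := h _ (.inl ⟨i, rfl⟩)
    have h2 := h _ (.inr ⟨i, rfl⟩)
    simp only [LinearMap.neg_apply] at h2
    linarith
  · rintro h ℓ (⟨i, rfl⟩ | ⟨i, rfl⟩) <;> simp [h i]

theorem PointedCone.DualFG.of_fg [FiniteDimensional ℝ E] {C : PointedCone ℝ E} (hC : C.FG) :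
    C.DualFG .id := by
  classical
  obtain ⟨s, rfl⟩ := hC
  induction s using Finset.induction_on with
  | empty => simpa using dualFG_bot
  | insert v s _ ih =>
    rw [Finset.coe_insert, Submodule.span_insert, sup_comm]
    exact ih.sup_hull_singleton v

theorem PointedCone.DualFG.exists_minimal {R M N : Type*} [CommRing R] [PartialOrder R]
    [IsOrderedRing R] [AddCommGroup M] [Module R M] [AddCommGroup N] [Module R N]
    {p : M →ₗ[R] N →ₗ[R] R} {C : PointedCone R N} (hC : C.DualFG p) :
    ∃ D : Finset M, dual p D = C ∧ ∀ D' ⊂ D, dual p D' ≠ C := by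
  obtain ⟨D, hD, hmin⟩ := wellFounded_lt.has_min {D : Finset M | dual p D = C} hC
  exact ⟨D, hD, fun D' hD' h => hmin D' h hD'⟩

theorem PointedCone.exists_forall_pos (C : PointedCone ℝ E) {D : Finset (Dual ℝ E)}
    (hD : ∀ ℓ ∈ D, ∀ x ∈ C, 0 ≤ ℓ x) (h : ∀ ℓ ∈ D, ∃ x ∈ C, 0 < ℓ x) :
    ∃ x ∈ C, ∀ ℓ ∈ D, 0 < ℓ x := by
  choose! g hgC hg using h
  refine ⟨∑ ℓ ∈ D, g ℓ, sum_mem hgC, fun ℓ hℓ => ?_⟩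
  rw [map_sum]
  exact Finset.sum_pos' (fun ℓ' hℓ' => hD ℓ hℓ _ (hgC ℓ' hℓ')) ⟨ℓ, hℓ, hg ℓ hℓ⟩

theorem exists_neg_of_forall_ssubset_dual_ne
    (hD : ∀ D' ⊂ D, dual .id (D' : Set (Dual ℝ E)) ≠ dual .id (D : Set (Dual ℝ E)))
    {ℓ : Dual ℝ E} (hℓ : ℓ ∈ D) : ∃ z : E, (∀ ℓ' ∈ D, ℓ' ≠ ℓ → 0 ≤ ℓ' z) ∧ ℓ z < 0 := by
  classical
  by_contra! h
  refine hD _ (Finset.erase_ssubset hℓ) (le_antisymm (fun z hz ℓ' hℓ' => ?_)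
    (PointedCone.dual_anti (Finset.coe_subset.2 (Finset.erase_subset ℓ D))))
  by_cases hne : ℓ' = ℓ
  · exact hne ▸ h z fun ℓ'' hℓ'' hne' => hz (Finset.mem_erase.2 ⟨hne', hℓ''⟩)
  · exact hz (Finset.mem_erase.2 ⟨hne, hℓ'⟩)

theorem ker_le_span_facet {ℓ : Dual ℝ E} {w : E} (hw : ℓ w = 0)
    (hpos : ∀ ℓ' ∈ D, ℓ' ≠ ℓ → 0 < ℓ' w) :
    LinearMap.ker ℓ ≤
      Submodule.span ℝ {x ∈ (dual .id (D : Set (Dual ℝ E)) : Set E) | ℓ x = 0} := by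
  intro u hu
  rw [LinearMap.mem_ker] at hu
  have hev : ∀ᶠ ε in nhdsWithin (0 : ℝ) (Set.Ioi 0), ∀ ℓ' ∈ D, ℓ' ≠ ℓ → 0 < ℓ' (w + ε • u) := by
    rw [Filter.eventually_all_finset]
    intro ℓ' hℓ'
    by_cases hne : ℓ' = ℓ
    · exact .of_forall fun _ h => absurd hne h
    have hc : Continuous fun ε : ℝ => ℓ' w + ε * ℓ' u := by fun_prop
    have := (hc.tendsto 0).eventually (lt_mem_nhds (by simpa using hpos ℓ' hℓ' hne))
    exact (this.filter_mono nhdsWithin_le_nhds).mono fun ε h _ => by simpa using h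
  obtain ⟨ε, hε, hε0⟩ := (hev.and self_mem_nhdsWithin).exists
  have hmem : ∀ s : ℝ, (∀ ℓ' ∈ D, ℓ' ≠ ℓ → 0 ≤ ℓ' (w + s • u)) →
      w + s • u ∈ {x ∈ (dual .id (D : Set (Dual ℝ E)) : Set E) | ℓ x = 0} := by
    intro s hs
    have hℓ : ℓ (w + s • u) = 0 := by simp [hw, hu]
    refine ⟨fun ℓ' hℓ' => ?_, hℓ⟩
    by_cases hne : ℓ' = ℓ
    · simp [hne, hℓ]
    · exact hs ℓ' hℓ' hne
  have h0 := hmem 0 (fun ℓ' hℓ' hne => by simpa using (hpos ℓ' hℓ' hne).le)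
  have h1 := hmem ε (fun ℓ' hℓ' hne => (hε ℓ' hℓ' hne).le)
  have : u = ε⁻¹ • ((w + ε • u) - (w + (0 : ℝ) • u)) := by
    rw [zero_smul, add_zero, add_sub_cancel_left, smul_smul, inv_mul_cancel₀ (ne_of_gt hε0),
      one_smul]
  rw [this]
  exact Submodule.smul_mem _ _ (Submodule.sub_mem _ (Submodule.subset_span h1)
    (Submodule.subset_span h0))

theorem finrank_span_facet_add_one [FiniteDimensional ℝ E]
    (hD : ∀ D' ⊂ D, dual .id (D' : Set (Dual ℝ E)) ≠ dual .id (D : Set (Dual ℝ E)))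
    (hspan : Submodule.span ℝ (dual .id (D : Set (Dual ℝ E)) : Set E) = ⊤)
    {ℓ : Dual ℝ E} (hℓ : ℓ ∈ D) :
    finrank ℝ (Submodule.span ℝ {x ∈ (dual .id (D : Set (Dual ℝ E)) : Set E) | ℓ x = 0}) + 1 =
      finrank ℝ E := by
  have hne : ∀ ℓ' ∈ D, ℓ' ≠ 0 := fun ℓ' hℓ' h0 => by
    obtain ⟨z, -, hz⟩ := exists_neg_of_forall_ssubset_dual_ne hD hℓ'
    simp [h0] at hz
  obtain ⟨x₀, -, hx₀⟩ := (dual .id (D : Set (Dual ℝ E))).exists_forall_pos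
    (fun ℓ' hℓ' x hx => hx hℓ') fun ℓ' hℓ' => by
      obtain ⟨x, hx, hℓ'x⟩ : ∃ x ∈ (dual .id (D : Set (Dual ℝ E)) : Set E), ℓ' x ≠ 0 := by
        by_contra! h
        exact hne ℓ' hℓ' (LinearMap.ext_on hspan h)
      exact ⟨x, hx, (hx hℓ' : 0 ≤ ℓ' x).lt_of_ne' hℓ'x⟩
  obtain ⟨z, hz, hℓz⟩ := exists_neg_of_forall_ssubset_dual_ne hD hℓ
  -- `ℓ x₀ • z - ℓ z • x₀` is a positive multiple of the point where `[x₀, z]` crosses `ℓ = 0`.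
  have hw : ℓ (ℓ x₀ • z - ℓ z • x₀) = 0 := by
    simp only [map_sub, map_smul, smul_eq_mul]
    ring
  have hpos : ∀ ℓ' ∈ D, ℓ' ≠ ℓ → 0 < ℓ' (ℓ x₀ • z - ℓ z • x₀) := fun ℓ' hℓ' hne => by
    simp only [map_sub, map_smul, smul_eq_mul]
    nlinarith [mul_nonneg (hx₀ ℓ hℓ).le (hz ℓ' hℓ' hne), mul_pos (neg_pos.2 hℓz) (hx₀ ℓ' hℓ')]
  rw [le_antisymm (Submodule.span_le.2 fun x hx => hx.2) (ker_le_span_facet hw hpos)]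
  exact Dual.finrank_ker_add_one_of_ne_zero (hne ℓ hℓ)

theorem exists_smul_sub_smul_mem_dual {x y : E} (hx : ∀ ℓ ∈ D, 0 < ℓ x)
    (hy : y ∉ dual .id (D : Set (Dual ℝ E))) :
    ∃ ℓ ∈ D, ℓ y < 0 ∧ ℓ x • y - ℓ y • x ∈ dual .id (D : Set (Dual ℝ E)) := by
  classical
  have hN : (D.filter (· y < 0)).Nonempty := by
    simp only [PointedCone.mem_dual_id, Finset.mem_coe, not_forall, not_le] at hy
    obtain ⟨ℓ, hℓ, h⟩ := hy
    exact ⟨ℓ, Finset.mem_filter.2 ⟨hℓ, h⟩⟩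
  -- the ratio test of the simplex method: `ℓ` is the first facet hit from `x` towards `y`
  obtain ⟨ℓ, hℓ, hmin⟩ := (D.filter (· y < 0)).exists_min_image (fun ℓ => ℓ x / -ℓ y) hN
  rw [Finset.mem_filter] at hℓ
  refine ⟨ℓ, hℓ.1, hℓ.2, fun ℓ' hℓ' => ?_⟩
  have hxℓ := hx ℓ hℓ.1
  have hxℓ' := hx ℓ' hℓ'
  simp only [LinearMap.id_coe, id_eq, map_sub, map_smul, smul_eq_mul]
  rcases le_or_gt 0 (ℓ' y) with h | h
  · nlinarith [mul_nonneg hxℓ.le h, mul_pos (neg_pos.2 hℓ.2) hxℓ']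
  · have := hmin ℓ' (Finset.mem_filter.2 ⟨hℓ', h⟩)
    rw [div_le_div_iff₀ (neg_pos.2 hℓ.2) (neg_pos.2 h)] at this
    linarith

variable {n : ℕ}

theorem IsFGConvexCone.exists_fg {C : Set (Fin n → ℝ)} (hC : IsFGConvexCone C) :
    ∃ K : PointedCone ℝ (Fin n → ℝ), K.FG ∧ (K : Set (Fin n → ℝ)) = C := by
  obtain ⟨m, v, rfl⟩ := hC
  refine ⟨hull ℝ (Set.range v), Submodule.fg_span (Set.finite_range v), Set.ext fun x => ?_⟩
  rw [SetLike.mem_coe, Submodule.mem_span_range_iff_exists_fun]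
  constructor
  · rintro ⟨c, rfl⟩
    exact ⟨fun i => c i, fun i => (c i).2, by simp only [Nonneg.coe_smul]⟩
  · rintro ⟨c, hc, rfl⟩
    exact ⟨fun i => ⟨c i, hc i⟩, by simp only [Nonneg.mk_smul]⟩

theorem isFaceOf_self (C : Set (Fin n → ℝ)) : IsFaceOf C C :=
  ⟨0, fun _ _ => le_rfl, by simp⟩

theorem IsFaceOf.mem_of_smul_add_smul_mem {F C : Set (Fin n → ℝ)} (hF : IsFaceOf F C)
    {x y : Fin n → ℝ} (hx : x ∈ C) (hy : y ∈ C) {a b : ℝ} (ha : 0 < a) (hb : 0 ≤ b)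
    (h : a • x + b • y ∈ F) : x ∈ F := by
  obtain ⟨ℓ, hℓ, rfl⟩ := hF
  have h0 := h.2
  simp only [map_add, map_smul, smul_eq_mul] at h0
  have : a * ℓ x = 0 := by nlinarith [mul_nonneg ha.le (hℓ x hx), mul_nonneg hb (hℓ y hy)]
  exact ⟨hx, (mul_eq_zero.1 this).resolve_left ha.ne'⟩

theorem exists_not_isFaceOf_inter_facet {K : PointedCone ℝ (Fin n → ℝ)}
    {D : Finset (Dual ℝ (Fin n → ℝ))} {x y : Fin n → ℝ} (hxK : x ∈ K) (hx : ∀ ℓ ∈ D, 0 < ℓ x)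
    (hyK : y ∈ K) (hy : y ∉ dual .id (D : Set (Dual ℝ (Fin n → ℝ)))) :
    ∃ ℓ ∈ D, ¬ IsFaceOf ((K : Set (Fin n → ℝ)) ∩
      {z ∈ (dual .id (D : Set (Dual ℝ (Fin n → ℝ))) : Set (Fin n → ℝ)) | ℓ z = 0}) K := by
  obtain ⟨ℓ, hℓ, hℓy, hw⟩ := exists_smul_sub_smul_mem_dual hx hy
  refine ⟨ℓ, hℓ, fun hface => (hx ℓ hℓ).ne' ?_⟩
  have heq : (-ℓ y) • x + ℓ x • y = ℓ x • y - ℓ y • x := by rw [neg_smul, neg_add_eq_sub]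
  have hwK : (-ℓ y) • x + ℓ x • y ∈ K :=
    add_mem (K.smul_mem (neg_pos.2 hℓy).le hxK) (K.smul_mem (hx ℓ hℓ).le hyK)
  have hwℓ : ℓ ((-ℓ y) • x + ℓ x • y) = 0 := by
    simp only [map_add, map_smul, smul_eq_mul]
    ring
  exact (hface.mem_of_smul_add_smul_mem hxK hyK (neg_pos.2 hℓy) (hx ℓ hℓ).le
    ⟨hwK, heq ▸ hw, hwℓ⟩).2.2

theorem exists_codim_one_face_crossing_general
    {n : ℕ} (σ τ : Set (Fin n → ℝ))
    (hσ : IsFGConvexCone σ) (hτ : IsFGConvexCone τ)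
    (hτspan : Submodule.span ℝ τ = ⊤)
    (hcross : ¬ IsFaceOf (σ ∩ τ) σ) :
    ∃ F : Set (Fin n → ℝ), IsFaceOf F τ ∧
      Module.finrank ℝ (Submodule.span ℝ F) = n - 1 ∧
      ¬ IsFaceOf (σ ∩ F) σ := by
  obtain ⟨K, -, rfl⟩ := hσ.exists_fg
  obtain ⟨Kτ, hKτ, rfl⟩ := hτ.exists_fg
  obtain ⟨D, rfl, hD⟩ := (DualFG.of_fg hKτ).exists_minimal
  set τ : Set (Fin n → ℝ) := (dual .id (D : Set (Dual ℝ (Fin n → ℝ))) : Set (Fin n → ℝ))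
  have hfacet : ∀ ℓ ∈ D, ¬ IsFaceOf (K ∩ {x ∈ τ | ℓ x = 0}) K →
      ∃ F : Set (Fin n → ℝ), IsFaceOf F τ ∧
        finrank ℝ (Submodule.span ℝ F) = n - 1 ∧ ¬ IsFaceOf (K ∩ F) K := fun ℓ hℓ h => by
    refine ⟨_, ⟨ℓ, fun x hx => hx hℓ, rfl⟩, ?_, h⟩
    have : finrank ℝ (Submodule.span ℝ {x ∈ τ | ℓ x = 0}) + 1 = n :=
      (finrank_span_facet_add_one hD hτspan hℓ).trans (finrank_fin_fun ℝ)
    omega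
  by_cases hvanish : ∃ ℓ ∈ D, ∀ x ∈ (K : Set (Fin n → ℝ)) ∩ τ, ℓ x = 0
  · obtain ⟨ℓ, hℓ, h0⟩ := hvanish
    refine hfacet ℓ hℓ ?_
    convert hcross using 2
    exact Set.ext fun x => ⟨fun ⟨hxK, hxD, _⟩ => ⟨hxK, hxD⟩, fun hx => ⟨hx.1, hx.2, h0 x hx⟩⟩
  push Not at hvanish
  obtain ⟨x, ⟨hxK, -⟩, hx⟩ := (K ⊓ dual .id (D : Set (Dual ℝ (Fin n → ℝ)))).exists_forall_pos
    (fun ℓ hℓ x hx => hx.2 hℓ) fun ℓ hℓ => by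
      obtain ⟨x, hx, hℓx⟩ := hvanish ℓ hℓ
      exact ⟨x, hx, (hx.2 hℓ : 0 ≤ ℓ x).lt_of_ne' hℓx⟩
  obtain ⟨y, hyK, hyD⟩ := Set.not_subset.1 fun h =>
    hcross (by rw [Set.inter_eq_left.2 h]; exact isFaceOf_self _)
  obtain ⟨ℓ, hℓ, h⟩ := exists_not_isFaceOf_inter_facet hxK hx hyK hyD
  exact hfacet ℓ hℓ h

/-- Let `σ` and `τ` be finitely generated convex cones in `ℝⁿ` whose
linear spans are all of `ℝⁿ`. If `τ` crosses `σ` (i.e. `σ ∩ τ` is not a face of `σ`),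
then there is a face `F` of `τ` whose linear span has dimension `n - 1` such that `F`
crosses `σ`. -/
theorem exists_codim_one_face_crossing
    {n : ℕ} (σ τ : Set (Fin n → ℝ))
    (hσ : IsFGConvexCone σ) (hτ : IsFGConvexCone τ)
    (hσspan : Submodule.span ℝ σ = ⊤) (hτspan : Submodule.span ℝ τ = ⊤)
    (hcross : ¬ IsFaceOf (σ ∩ τ) σ) :
    ∃ F : Set (Fin n → ℝ), IsFaceOf F τ ∧
      Module.finrank ℝ (Submodule.span ℝ F) = n - 1 ∧
      ¬ IsFaceOf (σ ∩ F) σ :=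
  exists_codim_one_face_crossing_general σ τ hσ hτ hτspan hcross
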